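/- arXiv:1505.06377 — 2 statements merged into one kernel-verified Lean document; each statement's English description precedes it below -/
import Mathlib

section
/- Let h_j(q) = ∑_{m > −∞} a_m q^m be a formal Laurent series and define, for a prime p, integer j ≥ 0, and weight k, the operator T_p on (log q)^j·h_j by T_p((log q)^j h_j) = (log q)^j ∑_m b_m q^m with b_m = p^{j+k−1} a_{m/p} + p^{−j} a_{pm} (a_{m/p} = 0 if p ∤ m). Let D act by D((log q)^j h_j) = j(log q)^{j−1} h_j + (log q)^j·(q·dh_j/dq), with the convention that applying D raises weight by 2. Then D ∘ T_p = (1/p)·T_p ∘ D on such series. -/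
/-- The extended Hecke operator `T_p` on the `j`-th component (coefficient of `(log q)^j`)
of a logarithmic `q`-series of weight `k`: if the component is `h = ∑_m a_m q^m`, the
result has coefficients `b_m = p^{j+k-1} a_{m/p} + p^{-j} a_{pm}` (with `a_{m/p} = 0`
unless `p ∣ m`). -/
noncomputable def stmt13.Tp (p : ℕ) (k : ℤ) (h : ℕ → ℤ → ℚ) : ℕ → ℤ → ℚ :=
  fun j m =>
    (p : ℚ) ^ ((j : ℤ) + k - 1) * (if (p : ℤ) ∣ m then h j (m / p) else 0)
      + (p : ℚ) ^ (-(j : ℤ)) * h j (p * m)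

/-- The operator `D = q·d/dq` on a logarithmic `q`-series `∑_j (log q)^j h_j`, recorded
componentwise: `D((log q)^j h_j) = j (log q)^{j-1} h_j + (log q)^j (q·dh_j/dq)`, so the
`j`-th component of the result is `(j+1)·h_{j+1} + (m ↦ m·(h_j)_m)`. -/
noncomputable def stmt13.D (h : ℕ → ℤ → ℚ) : ℕ → ℤ → ℚ :=
  fun j m => ((j : ℚ) + 1) * h (j + 1) m + (m : ℚ) * h j m

/-!
Compare coefficients. The `a_{pm}` part of `T_p` commutes with `D` up to the
factor `p` coming from `q·d/dq (q^{pm}) = pm q^{pm}`, and the `a_{m/p}` part does the same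
because `m = p · (m/p)` whenever `p ∣ m`; the logarithmic term `j (log q)^{j-1}` of `D` lowers
`j` by one, which the weight shift `k ↦ k + 2` exactly compensates in the exponent `j + k - 1`.
-/

lemma intCast_div_mul_ite_dvd {K : Type*} [DivisionRing K] [CharZero K] {p : ℕ} (hp : p ≠ 0)
    (m : ℤ) (x : K) :
    ((m / p : ℤ) : K) * (if (p : ℤ) ∣ m then x else 0)
      = (m : K) / p * if (p : ℤ) ∣ m then x else 0 := by
  split_ifs with hdvd
  · have hp' : ((p : ℤ) : K) ≠ 0 := by exact_mod_cast hp
    rw [Int.cast_div hdvd hp', Int.cast_natCast]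
  · simp

/-- The intertwining identity `D ∘ T_p = (1/p) · T_p ∘ D` on logarithmic `q`-series,
where `D` raises the weight from `k` to `k + 2`. -/
theorem stmt_13 (p : ℕ) (hp : p.Prime) (k : ℤ) (h : ℕ → ℤ → ℚ) (j : ℕ) (m : ℤ) :
    stmt13.D (stmt13.Tp p k h) j m = (1 / p : ℚ) * stmt13.Tp p (k + 2) (stmt13.D h) j m := by
  have hp0 : (p : ℚ) ≠ 0 := by exact_mod_cast hp.ne_zero
  -- `ring` cannot normalise integer exponents, so every power of `p` is written via `p^(j+k)`
  -- and `p^(-j)`.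
  have hpow_weight_add_two : (p : ℚ) ^ ((j : ℤ) + (k + 2) - 1) = p ^ ((j : ℤ) + k) * p := by
    rw [← zpow_add_one₀ hp0]; ring_nf
  have hpow_succ : (p : ℚ) ^ (((j + 1 : ℕ) : ℤ) + k - 1) = p ^ ((j : ℤ) + k) := by
    push_cast; ring_nf
  have hpow : (p : ℚ) ^ ((j : ℤ) + k - 1) = p ^ ((j : ℤ) + k) * (p : ℚ)⁻¹ := zpow_sub_one₀ hp0 _
  have hpow_neg_succ : (p : ℚ) ^ (-((j + 1 : ℕ) : ℤ)) = p ^ (-(j : ℤ)) * (p : ℚ)⁻¹ := by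
    rw [← zpow_sub_one₀ hp0]; push_cast; ring_nf
  simp only [stmt13.D, stmt13.Tp, ite_add_zero, ← mul_ite_zero]
  rw [intCast_div_mul_ite_dvd hp.ne_zero, hpow_weight_add_two, hpow_succ, hpow, hpow_neg_succ]
  push_cast
  field_simp
  ring
end

section
/- With the extended Hecke action of Definition 5.1 (weights: log q has weight −2; log Δ = log q − 24∑_{m≥1}σ_{−1}(m)q^m has weight 0), for every prime p one has T_p(log Δ) = σ_{−1}(p)·log Δ. Consequently (1 − T_p + p·T_{2,p})(log Δ) = 0, where T_{2,p} acts on log Δ as multiplication by p^{−2}, i.e. (1 − σ_{−1}(p) + p^{−1})·log Δ = 0. -/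
/-- The extended Hecke operator `T_p` on the `j`-th component (coefficient of `(log q)^j`)
of a logarithmic `q`-series of weight `k`, with coefficients
`b_m = p^{j+k-1} a_{m/p} + p^{-j} a_{pm}`. -/
noncomputable def stmt14.Tp (p : ℕ) (k : ℤ) (h : ℕ → ℤ → ℚ) : ℕ → ℤ → ℚ :=
  fun j m =>
    (p : ℚ) ^ ((j : ℤ) + k - 1) * (if (p : ℤ) ∣ m then h j (m / p) else 0)
      + (p : ℚ) ^ (-(j : ℤ)) * h j (p * m)

/-- `σ_{-1}(n) = ∑_{d ∣ n} 1/d`. -/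
def stmt14.sigmaNegOne (n : ℕ) : ℚ := ∑ d ∈ Nat.divisors n, (1 : ℚ) / d

/-- The components of `log Δ = log q - 24 ∑_{m ≥ 1} σ_{-1}(m) q^m`, a logarithmic
`q`-series of weight `0`: the `(log q)^1`-component is the constant `1` and the
`(log q)^0`-component is `-24 ∑_{m ≥ 1} σ_{-1}(m) q^m`. -/
noncomputable def stmt14.logDelta : ℕ → ℤ → ℚ :=
  fun j m =>
    if j = 1 then (if m = 0 then 1 else 0)
    else if j = 0 then (if 1 ≤ m then -24 * stmt14.sigmaNegOne m.toNat else 0)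
    else 0

open ArithmeticFunction ArithmeticFunction.sigma in
lemma stmt14.sig_eq {n : ℕ} (hn : n ≠ 0) :
    stmt14.sigmaNegOne n = (σ 1 n : ℚ) / n := by
  unfold stmt14.sigmaNegOne
  rw [← Nat.sum_div_divisors n (fun d => (1:ℚ)/d), sigma_one_apply, Nat.cast_sum,
    Finset.sum_div]
  refine Finset.sum_congr rfl fun d hd => ?_
  rw [Nat.mem_divisors] at hd
  have h1 : (n / d : ℕ) * d = n := Nat.div_mul_cancel hd.1
  have hd0 : d ≠ 0 := fun h => hn (by simpa [h] using hd.1)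
  have hnd0 : (n / d : ℕ) ≠ 0 := fun h => hn (by simpa [h] using h1.symm)
  have hd0' : (d:ℚ) ≠ 0 := Nat.cast_ne_zero.mpr hd0
  have hnd0' : ((n/d : ℕ):ℚ) ≠ 0 := Nat.cast_ne_zero.mpr hnd0
  have hn0' : (n:ℚ) ≠ 0 := Nat.cast_ne_zero.mpr hn
  field_simp
  exact_mod_cast h1.symm

lemma stmt14.geom_step (p b : ℕ) :
    p * ∑ i ∈ Finset.range (b + 1), p ^ i + 1 = ∑ i ∈ Finset.range (b + 2), p ^ i := by
  rw [Finset.sum_range_succ' (fun i => p ^ i) (b+1), Finset.mul_sum]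
  simp [pow_succ, mul_comm]

open ArithmeticFunction ArithmeticFunction.sigma in
lemma stmt14.sigma_pow_key (p : ℕ) (hp : p.Prime) (a : ℕ) :
    σ 1 (p ^ (a + 1)) + (if 1 ≤ a then p * σ 1 (p ^ (a - 1)) else 0)
      = (p + 1) * σ 1 (p ^ a) := by
  cases a with
  | zero =>
    rw [if_neg (by omega : ¬ 1 ≤ 0), add_zero, sigma_one_apply_prime_pow hp,
      sigma_one_apply_prime_pow hp, Finset.sum_range_succ, Finset.sum_range_succ,
      Finset.sum_range_zero]
    ring
  | succ b =>
    simp only [if_pos (Nat.le_add_left 1 b), Nat.add_sub_cancel,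
      sigma_one_apply_prime_pow hp]
    have h1 := stmt14.geom_step p b
    have h2 := stmt14.geom_step p (b+1)
    nlinarith [h1, h2]

open ArithmeticFunction ArithmeticFunction.sigma in
lemma stmt14.nat_key (p : ℕ) (hp : p.Prime) {n : ℕ} (hn : n ≠ 0) :
    σ 1 (p * n) + (if p ∣ n then p * σ 1 (n / p) else 0) = (p + 1) * σ 1 n := by
  set a := n.factorization p with ha
  set m := n / p ^ a with hm
  have hfac : p ^ a * m = n := Nat.ordProj_mul_ordCompl_eq_self n p
  have hcop : Nat.Coprime p m := Nat.coprime_ordCompl hp hn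
  have hmul : ∀ k, σ 1 (p ^ k * m) = σ 1 (p ^ k) * σ 1 m := fun k =>
    isMultiplicative_sigma.map_mul_of_coprime (hcop.pow_left k)
  have hdvd : p ∣ n ↔ 1 ≤ a := hp.dvd_iff_one_le_factorization hn
  have hpn : p * n = p ^ (a + 1) * m := by rw [← hfac]; ring
  have key := stmt14.sigma_pow_key p hp a
  by_cases h : p ∣ n
  · have ha1 : 1 ≤ a := hdvd.mp h
    have hpa : p * p ^ (a - 1) = p ^ a := by
      rw [← pow_succ']
      congr 1
      omega
    have hnp : n / p = p ^ (a - 1) * m := by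
      have hn2 : n = p * (p ^ (a - 1) * m) := by rw [← hfac, ← hpa]; ring
      rw [hn2, Nat.mul_div_cancel_left _ hp.pos]
    rw [if_pos h, hpn, hnp, hmul, hmul, ← hfac, hmul]
    rw [if_pos ha1] at key
    nlinarith [key]
  · have ha0 : ¬ 1 ≤ a := fun hc => h (hdvd.mpr hc)
    rw [if_neg h, add_zero, hpn, hmul, ← hfac, hmul]
    rw [if_neg ha0, add_zero] at key
    rw [key]; ring

open ArithmeticFunction ArithmeticFunction.sigma in
lemma stmt14.rat_key (p : ℕ) (hp : p.Prime) {n : ℕ} (hn : n ≠ 0) :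
    stmt14.sigmaNegOne (p * n)
      + (if p ∣ n then (p : ℚ)⁻¹ * stmt14.sigmaNegOne (n / p) else 0)
      = stmt14.sigmaNegOne p * stmt14.sigmaNegOne n := by
  have hp0 : (p:ℚ) ≠ 0 := Nat.cast_ne_zero.mpr hp.pos.ne'
  have hn0 : (n:ℚ) ≠ 0 := Nat.cast_ne_zero.mpr hn
  have hpn : p * n ≠ 0 := Nat.mul_ne_zero hp.pos.ne' hn
  have hsp : stmt14.sigmaNegOne p = ((p:ℚ) + 1) / p := by
    rw [stmt14.sig_eq hp.pos.ne']
    have : σ 1 p = p + 1 := by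
      rw [sigma_one_apply, hp.divisors, Finset.sum_pair hp.one_lt.ne]
      omega
    rw [this]; push_cast; ring
  have hkey := stmt14.nat_key p hp hn
  by_cases h : p ∣ n
  · have hnp : n / p ≠ 0 := by
      have := Nat.le_of_dvd (Nat.pos_of_ne_zero hn) h
      have := Nat.one_le_div_iff hp.pos |>.mpr this
      omega
    have hnpc : ((n / p : ℕ) : ℚ) = (n : ℚ) / p := Nat.cast_div h hp0
    rw [if_pos h] at hkey ⊢
    rw [stmt14.sig_eq hpn, stmt14.sig_eq hnp, stmt14.sig_eq hn, hsp, hnpc]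
    have hc : (σ 1 (p * n) : ℚ) + p * σ 1 (n / p) = ((p:ℚ) + 1) * σ 1 n := by
      exact_mod_cast hkey
    field_simp
    push_cast
    linear_combination ((p:ℚ) * n) * hc
  · rw [if_neg h, add_zero] at hkey ⊢
    rw [stmt14.sig_eq hpn, stmt14.sig_eq hn, hsp]
    have hc : (σ 1 (p * n) : ℚ) = ((p:ℚ) + 1) * σ 1 n := by exact_mod_cast hkey
    rw [hc]
    push_cast
    field_simp


/-- For every prime `p`, `T_p (log Δ) = σ_{-1}(p) · log Δ` under the extended Hecke action
(weight `0`), and consequently `(1 - σ_{-1}(p) + p⁻¹) · log Δ = 0`. -/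
theorem stmt_14 (p : ℕ) (hp : p.Prime) :
    (∀ j m, stmt14.Tp p 0 stmt14.logDelta j m = stmt14.sigmaNegOne p * stmt14.logDelta j m) ∧
      (∀ j m, (1 - stmt14.sigmaNegOne p + (p : ℚ)⁻¹) * stmt14.logDelta j m = 0) := by
  have hp0 : (p:ℚ) ≠ 0 := Nat.cast_ne_zero.mpr hp.pos.ne'
  have hpz : (p:ℤ) ≠ 0 := Int.natCast_ne_zero.mpr hp.pos.ne'
  have hp1 : (1:ℤ) ≤ (p:ℤ) := by exact_mod_cast hp.pos
  have hsp : stmt14.sigmaNegOne p = 1 + (p:ℚ)⁻¹ := by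
    rw [stmt14.sigmaNegOne, hp.divisors, Finset.sum_pair hp.one_lt.ne]
    rw [one_div, one_div, Nat.cast_one, inv_one]
  constructor
  · intro j m
    match j with
    | 0 =>
      simp only [stmt14.Tp, stmt14.logDelta]
      norm_num
      rcases le_or_gt 1 m with hm | hm
      · set n := m.toNat with hn
        have hmn : m = (n : ℤ) := (Int.toNat_of_nonneg (by omega)).symm
        have hn1 : 1 ≤ n := by omega
        have hdvd : (p:ℤ) ∣ m ↔ p ∣ n := by rw [hmn, Int.natCast_dvd_natCast]
        have hpm : ((p:ℤ) * m).toNat = p * n := by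
          rw [hmn, ← Nat.cast_mul, Int.toNat_natCast]
        have hpm1 : 1 ≤ (p:ℤ) * m := by nlinarith
        rw [if_pos hm, if_pos hpm1, hpm]
        by_cases h : p ∣ n
        · have hdz : (p:ℤ) ∣ m := hdvd.mpr h
          have hdiv : m / (p:ℤ) = ((n / p : ℕ) : ℤ) := by
            rw [hmn, Int.natCast_div]
          have hnp1 : 1 ≤ n / p :=
            (Nat.one_le_div_iff hp.pos).mpr (Nat.le_of_dvd hn1 h)
          have h1 : (1:ℤ) ≤ m / p := by rw [hdiv]; exact_mod_cast hnp1
          rw [if_pos hdz, hdiv, if_pos (by exact_mod_cast hnp1 : (1:ℤ) ≤ ((n/p : ℕ):ℤ)),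
            Int.toNat_natCast]
          have hkey := stmt14.rat_key p hp (show n ≠ 0 by omega)
          rw [if_pos h] at hkey
          linear_combination (-24 : ℚ) * hkey
        · rw [if_neg (fun hdz => h (hdvd.mp hdz))]
          have hkey := stmt14.rat_key p hp (show n ≠ 0 by omega)
          rw [if_neg h, add_zero] at hkey
          linear_combination (-24 : ℚ) * hkey
      · have h1 : ¬ (1 : ℤ) ≤ m := by omega
        have h2 : ¬ (1 : ℤ) ≤ (p:ℤ) * m := by
          have : (p:ℤ) * m ≤ 0 :=
            mul_nonpos_of_nonneg_of_nonpos (by positivity) (by omega)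
          omega
        rw [if_neg h1, if_neg h2]
        split_ifs with hd hq
        · exfalso
          obtain ⟨c, rfl⟩ := hd
          rw [Int.mul_ediv_cancel_left _ hpz] at hq
          nlinarith
        · norm_num
        · norm_num
    | 1 =>
      simp only [stmt14.Tp, stmt14.logDelta]
      norm_num [hpz, hp.ne_zero]
      by_cases hm : m = 0
      · subst hm
        norm_num [hsp]
      · simp only [if_neg hm]
        split_ifs with hd hq
        · exfalso
          obtain ⟨c, rfl⟩ := hd
          rw [Int.mul_ediv_cancel_left _ hpz] at hq
          exact hm (by simp [hq])
        · norm_num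
        · norm_num
    | (j+2) =>
      simp [stmt14.Tp, stmt14.logDelta]
  · intro j m
    have h0 : (1 : ℚ) - stmt14.sigmaNegOne p + (p:ℚ)⁻¹ = 0 := by rw [hsp]; ring
    rw [h0, zero_mul]
end
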